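/- arXiv:2111.10211 — 2 statements merged into one kernel-verified Lean document; each statement's English description precedes it below -/
import Mathlib

section
/- For every integer k ≥ 2, the number 1818, 18018, 180018, ... formed as 18·10^k + 18 (i.e., two copies of '18' with k−2 zeros in between) is a v-palindrome in base ten. -/
/-- `v n` sums, over the prime factorization of `n`, each prime plus its
exponent when the exponent is at least `2` (primes with exponent `1`
contribute just the prime). -/
def v (n : ℕ) : ℕ :=
  ∑ p ∈ n.primeFactors, (p + if 2 ≤ n.factorization p then n.factorization p else 0)

/-- Base-`b` digit reversal. -/
def revDigits (b n : ℕ) : ℕ := Nat.ofDigits b (Nat.digits b n).reverse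

/-- `n` is a v-palindrome in base `b`. -/
def IsVPalindrome (b n : ℕ) : Prop :=
  ¬ b ∣ n ∧ n ≠ revDigits b n ∧ v n = v (revDigits b n)

/-!
Writing `m = 10 ^ k + 1`, the number is `18 * m` and its reversal is `81 * m`. Since `m` is prime
to `6`, `v` is additive on both products, and
`v 18 = v (2 * 3 ^ 2) = 2 + 3 + 2 = 7 = 3 + 4 = v (3 ^ 4)`.
-/

theorem revDigits_mul_pow_add_self {b a k : ℕ} (hb : 1 < b) (ha : 0 < a)
    (hk : (Nat.digits b a).length ≤ k) :
    revDigits b (a * b ^ k + a) = revDigits b a * b ^ k + revDigits b a := by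
  obtain ⟨j, rfl⟩ := Nat.exists_eq_add_of_le hk
  unfold revDigits
  rw [add_comm, mul_comm, ← Nat.digits_append_zeroes_append_digits hb ha]
  simp only [List.reverse_append, List.reverse_replicate, Nat.ofDigits_append,
    Nat.ofDigits_replicate_zero, List.length_replicate, List.length_reverse]
  ring

theorem v_mul_of_coprime {a b : ℕ} (ha : a ≠ 0) (hb : b ≠ 0) (h : a.Coprime b) :
    v (a * b) = v a + v b := by
  have hdisj := h.disjoint_primeFactors
  rw [v, Nat.primeFactors_mul ha hb, Finset.sum_union hdisj, Nat.factorization_mul_of_coprime h]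
  congr 1 <;> refine Finset.sum_congr rfl fun p hp => ?_
  · have : b.factorization p = 0 :=
      Finsupp.notMem_support_iff.mp (Finset.disjoint_left.mp hdisj hp)
    simp [this]
  · have : a.factorization p = 0 :=
      Finsupp.notMem_support_iff.mp (Finset.disjoint_right.mp hdisj hp)
    simp [this]

theorem v_prime_pow {p e : ℕ} (hp : p.Prime) (he : e ≠ 0) :
    v (p ^ e) = p + if 2 ≤ e then e else 0 := by
  simp [v, Nat.primeFactors_prime_pow he hp, hp.factorization_pow]

theorem v_eighteen : v 18 = 7 := by
  rw [show 18 = 2 ^ 1 * 3 ^ 2 by rfl, v_mul_of_coprime (by norm_num) (by norm_num) (by norm_num),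
    v_prime_pow Nat.prime_two one_ne_zero, v_prime_pow Nat.prime_three two_ne_zero]
  rfl

theorem v_eightyOne : v 81 = 7 := by
  rw [show 81 = 3 ^ 4 by rfl, v_prime_pow Nat.prime_three (by norm_num)]
  rfl

theorem coprime_six_ten_pow_add_one {k : ℕ} (hk : k ≠ 0) : Nat.Coprime 6 (10 ^ k + 1) := by
  have h2 : ¬ 2 ∣ 10 ^ k + 1 := by
    rw [Nat.dvd_add_right (dvd_pow (by norm_num) hk)]
    norm_num
  have h3 : ¬ 3 ∣ 10 ^ k + 1 := by
    have : 10 ^ k % 3 = 1 := by rw [Nat.pow_mod]; norm_num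
    omega
  exact Nat.Coprime.mul_left (Nat.prime_two.coprime_iff_not_dvd.mpr h2)
    (Nat.prime_three.coprime_iff_not_dvd.mpr h3)

theorem stmt_6 (k : ℕ) (hk : 2 ≤ k) : IsVPalindrome 10 (18 * 10 ^ k + 18) := by
  have hrev : revDigits 10 (18 * 10 ^ k + 18) = 81 * (10 ^ k + 1) := by
    rw [revDigits_mul_pow_add_self (by norm_num) (by norm_num) (by norm_num; omega),
      show revDigits 10 18 = 81 by norm_num [revDigits, Nat.ofDigits]]
    ring
  have hm : 10 ^ k + 1 ≠ 0 := by positivity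
  have hcop : Nat.Coprime 6 (10 ^ k + 1) := coprime_six_ten_pow_add_one (by omega)
  refine ⟨?_, ?_, ?_⟩
  · rw [Nat.dvd_add_right (dvd_mul_of_dvd_right (dvd_pow_self 10 (by omega)) 18)]
    norm_num
  · rw [hrev]
    omega
  · rw [hrev, show 18 * 10 ^ k + 18 = 18 * (10 ^ k + 1) by ring,
      v_mul_of_coprime (by norm_num) hm ((hcop.pow_left 2).coprime_dvd_left (by norm_num)),
      v_mul_of_coprime (by norm_num) hm ((hcop.pow_left 4).coprime_dvd_left (by norm_num)),
      v_eighteen, v_eightyOne]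
end

section
/- Let b ≥ 2. Suppose there exist positive integers a, c, t with a < c < b, gcd(t, 30) = 1, ab + c = 5t, and cb + a = 6t. Then the two-digit base-b number ab + c is a v-palindrome in base b. -/
/-! The reversal of `a * b + c` is `c * b + a`, i.e. `5 * t ↦ 6 * t`. Since `v` is additive on
coprime factors and `v 5 = 5 = 2 + 3 = v 6`, both sides have `v` equal to `5 + v t`. -/

theorem v_eq_factorization_sum (n : ℕ) :
    v n = n.factorization.sum fun p k => p + if 2 ≤ k then k else 0 :=
  rfl

theorem v_mul_of_coprime_s7 {m n : ℕ} (h : m.Coprime n) : v (m * n) = v m + v n := by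
  rw [v_eq_factorization_sum, Nat.factorization_mul_of_coprime h,
    Finsupp.sum_add_index_of_disjoint h.disjoint_primeFactors]
  rfl

theorem v_prime {p : ℕ} (hp : p.Prime) : v p = p := by
  simp [v, hp.primeFactors, hp.factorization]

theorem v_five_eq_v_six : v 5 = v 6 := by
  rw [show 6 = 2 * 3 from rfl, v_mul_of_coprime_s7 (by norm_num), v_prime Nat.prime_two,
    v_prime Nat.prime_three, v_prime Nat.prime_five]

theorem digits_mul_add {b a c : ℕ} (ha : 0 < a) (hab : a < b) (hcb : c < b) :
    Nat.digits b (a * b + c) = [c, a] := by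
  rw [mul_comm, add_comm, Nat.digits_add b (by omega) c a hcb (Or.inr ha.ne'),
    Nat.digits_of_lt b a ha.ne' hab]

theorem revDigits_mul_add {b a c : ℕ} (ha : 0 < a) (hab : a < b) (hcb : c < b) :
    revDigits b (a * b + c) = c * b + a := by
  rw [revDigits, digits_mul_add ha hab hcb]
  change Nat.ofDigits b [a, c] = _
  rw [Nat.ofDigits_cons, Nat.ofDigits_singleton, mul_comm, add_comm]

theorem stmt_7_general (b a c t : ℕ) (ha : 0 < a) (hac : a < c) (hcb : c < b)
    (ht : 0 < t) (hgcd : Nat.gcd t 30 = 1)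
    (h1 : a * b + c = 5 * t) (h2 : c * b + a = 6 * t) :
    IsVPalindrome b (a * b + c) := by
  have hrev : revDigits b (a * b + c) = c * b + a := revDigits_mul_add ha (hac.trans hcb) hcb
  have h5 : Nat.Coprime 5 t := (Nat.Coprime.coprime_dvd_right (by norm_num) hgcd).symm
  have h6 : Nat.Coprime 6 t := (Nat.Coprime.coprime_dvd_right (by norm_num) hgcd).symm
  refine ⟨?_, ?_, ?_⟩
  · exact (Nat.dvd_add_right (dvd_mul_left b a)).not.mpr
      (Nat.not_dvd_of_pos_of_lt (ha.trans hac) hcb)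
  · rw [hrev, h1, h2]
    omega
  · rw [hrev, h1, h2, v_mul_of_coprime_s7 h5, v_mul_of_coprime_s7 h6, v_five_eq_v_six]

theorem stmt_7 (b a c t : ℕ) (hb : 2 ≤ b) (ha : 0 < a) (hac : a < c) (hcb : c < b)
    (ht : 0 < t) (hgcd : Nat.gcd t 30 = 1)
    (h1 : a * b + c = 5 * t) (h2 : c * b + a = 6 * t) :
    IsVPalindrome b (a * b + c) :=
  stmt_7_general b a c t ha hac hcb ht hgcd h1 h2
end
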